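/- For 0 < s ≤ 2 the singular value function φ^s is submultiplicative: for all invertible real 2×2 matrices M, N with operator norm at most 1, φ^s(MN) ≤ φ^s(M)·φ^s(N). -/

import Mathlib

/-!
For `s ≤ 1`, `φ^s = α₁^s` and `α₁` is the `L²` operator norm, which is submultiplicative.
For `1 < s ≤ 2`, the identity `α₁ α₂ = |det|` rewrites `φ^s` as `α₁^(2 - s) · |det|^(s - 1)`:
a nonnegative power of the submultiplicative `α₁` times a power of the multiplicative `|det|`.
-/

/-- The larger singular value of a 2×2 real matrix: its operator norm as a map
between Euclidean spaces. -/
noncomputable def alpha1 (M : Matrix (Fin 2) (Fin 2) ℝ) : ℝ :=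
  ‖(Matrix.toEuclideanLin M).toContinuousLinearMap‖

/-- The smaller singular value of a 2×2 real matrix (the two singular values
multiply to |det M|). -/
noncomputable def alpha2 (M : Matrix (Fin 2) (Fin 2) ℝ) : ℝ :=
  |M.det| / alpha1 M

/-- Falconer's singular value function: φ^s(M) = α₁(M)^s for s ≤ 1 and
φ^s(M) = α₁(M)·α₂(M)^{s−1} for s > 1. -/
noncomputable def phi (s : ℝ) (M : Matrix (Fin 2) (Fin 2) ℝ) : ℝ :=
  if s ≤ 1 then alpha1 M ^ s else alpha1 M * alpha2 M ^ (s - 1)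

section SingularValues

open scoped Matrix.Norms.L2Operator

variable {M N : Matrix (Fin 2) (Fin 2) ℝ}

theorem alpha1_eq_norm (M : Matrix (Fin 2) (Fin 2) ℝ) : alpha1 M = ‖M‖ := rfl

theorem alpha1_nonneg (M : Matrix (Fin 2) (Fin 2) ℝ) : 0 ≤ alpha1 M := norm_nonneg M

theorem alpha1_pos (hM : IsUnit M) : 0 < alpha1 M := by
  rw [alpha1_eq_norm]
  exact norm_pos_iff.2 hM.ne_zero

theorem alpha1_mul_le (M N : Matrix (Fin 2) (Fin 2) ℝ) :
    alpha1 (M * N) ≤ alpha1 M * alpha1 N :=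
  norm_mul_le M N

theorem alpha1_mul_rpow_le {t : ℝ} (ht : 0 ≤ t) (M N : Matrix (Fin 2) (Fin 2) ℝ) :
    alpha1 (M * N) ^ t ≤ alpha1 M ^ t * alpha1 N ^ t := by
  rw [← Real.mul_rpow (alpha1_nonneg M) (alpha1_nonneg N)]
  exact Real.rpow_le_rpow (alpha1_nonneg _) (alpha1_mul_le M N) ht

theorem abs_det_mul_rpow (t : ℝ) (M N : Matrix (Fin 2) (Fin 2) ℝ) :
    |(M * N).det| ^ t = |M.det| ^ t * |N.det| ^ t := by
  rw [Matrix.det_mul, abs_mul, Real.mul_rpow (abs_nonneg _) (abs_nonneg _)]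

theorem phi_of_le_one {s : ℝ} (hs : s ≤ 1) (M : Matrix (Fin 2) (Fin 2) ℝ) :
    phi s M = alpha1 M ^ s :=
  if_pos hs

theorem phi_of_one_lt {s : ℝ} (hs : 1 < s) (hM : IsUnit M) :
    phi s M = alpha1 M ^ (2 - s) * |M.det| ^ (s - 1) := by
  have hα := alpha1_pos hM
  have hpow : alpha1 M ^ (2 - s) = alpha1 M / alpha1 M ^ (s - 1) := by
    rw [show (2 : ℝ) - s = 1 - (s - 1) by ring, Real.rpow_sub hα, Real.rpow_one]
  rw [phi, if_neg hs.not_ge, alpha2, Real.div_rpow (abs_nonneg _) hα.le, hpow]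
  field_simp

end SingularValues

theorem stmt_4_general (s : ℝ) (hs0 : 0 < s) (hs2 : s ≤ 2)
    (M N : Matrix (Fin 2) (Fin 2) ℝ)
    (hMdet : IsUnit M) (hNdet : IsUnit N) :
    phi s (M * N) ≤ phi s M * phi s N := by
  rcases le_or_gt s 1 with hs1 | hs1
  · simp only [phi_of_le_one hs1]
    exact alpha1_mul_rpow_le hs0.le M N
  · rw [phi_of_one_lt hs1 (hMdet.mul hNdet), phi_of_one_lt hs1 hMdet, phi_of_one_lt hs1 hNdet,
      abs_det_mul_rpow]
    calc alpha1 (M * N) ^ (2 - s) * (|M.det| ^ (s - 1) * |N.det| ^ (s - 1))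
        ≤ alpha1 M ^ (2 - s) * alpha1 N ^ (2 - s) * (|M.det| ^ (s - 1) * |N.det| ^ (s - 1)) := by
          gcongr
          exact alpha1_mul_rpow_le (by linarith) M N
      _ = alpha1 M ^ (2 - s) * |M.det| ^ (s - 1) * (alpha1 N ^ (2 - s) * |N.det| ^ (s - 1)) := by
          ring

theorem stmt_4 (s : ℝ) (hs0 : 0 < s) (hs2 : s ≤ 2)
    (M N : Matrix (Fin 2) (Fin 2) ℝ)
    (hMdet : IsUnit M) (hNdet : IsUnit N)
    (hMnorm : alpha1 M ≤ 1) (hNnorm : alpha1 N ≤ 1) :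
    phi s (M * N) ≤ phi s M * phi s N :=
  stmt_4_general s hs0 hs2 M N hMdet hNdet
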